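/- arXiv:1802.03716 — 5 statements merged into one kernel-verified Lean document; each statement's English description precedes it below -/
import Mathlib

section
/- For every Kripke model M = (S,R,V), every world s in S, and all formulas φ, ψ, χ of L(∇,•), if M,s ⊨ •(φ→ψ) and M,s ⊨ •(¬φ→χ), then M,s ⊨ ∇φ; that is, the formula (•(φ→ψ) ∧ •(¬φ→χ)) → ∇φ is valid on the class of all Kripke models. -/
inductive Form : Type
  | atom : Nat → Form
  | neg : Form → Form
  | and : Form → Form → Form
  | nabla : Form → Form
  | bull : Form → Form

namespace Form
def imp (φ ψ : Form) : Form := neg (and φ (neg ψ))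
def orf (φ ψ : Form) : Form := neg (and (neg φ) (neg ψ))
def ifff (φ ψ : Form) : Form := and (imp φ ψ) (imp ψ φ)
def delta (φ : Form) : Form := neg (nabla φ)
def circ (φ : Form) : Form := neg (bull φ)
end Form

structure Model (W : Type) where
  R : W → W → Prop
  V : Nat → W → Prop

def sat {W : Type} (M : Model W) : W → Form → Prop
  | s, .atom n => M.V n s
  | s, .neg φ => ¬ sat M s φ
  | s, .and φ ψ => sat M s φ ∧ sat M s ψ
  | s, .nabla φ => ∃ t u, M.R s t ∧ M.R s u ∧ sat M t φ ∧ ¬ sat M u φ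
  | s, .bull φ => sat M s φ ∧ ∃ t, M.R s t ∧ ¬ sat M t φ

theorem stmt1 (W : Type) [Nonempty W] (M : Model W) (s : W) (φ ψ χ : Form) :
    sat M s (.bull (Form.imp φ ψ)) → sat M s (.bull (Form.imp (.neg φ) χ)) →
      sat M s (.nabla φ) := by
  rintro ⟨_, t, hRt, ht⟩ ⟨_, u, hRu, hu⟩
  simp only [Form.imp, sat, not_not, not_and, Classical.not_imp] at ht hu
  obtain ⟨htφ, -⟩ := ht
  obtain ⟨huφ, -⟩ := hu
  exact ⟨t, u, hRt, hRu, htφ, huφ⟩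
end

section
/- A Kripke frame F = (S,R) is transitive if and only if F validates the formula Tr: (•q ∧ Δp ∧ ∘(¬q → p)) → ∘(¬q → ∘(¬r → p)), where p, q, r are distinct propositional variables. That is, R is transitive iff for every valuation V on F and every world s, ((F,V),s) satisfies Tr. -/
/-- The formula `Tr`: `(•q ∧ Δp ∧ ∘(¬q → p)) → ∘(¬q → ∘(¬r → p))`,
with `p = atom 0`, `q = atom 1`, `r = atom 2` (distinct variables). -/
def Tr : Form :=
  Form.imp
    (.and (.bull (.atom 1))
      (.and (Form.delta (.atom 0)) (Form.circ (Form.imp (.neg (.atom 1)) (.atom 0)))))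
    (Form.circ (Form.imp (.neg (.atom 1))
      (Form.circ (Form.imp (.neg (.atom 2)) (.atom 0)))))

/-! Soundness: `•q`, `Δp` and `∘(¬q → p)` at `s` force `p` at every successor of `s`, and on a
transitive frame every successor of a successor of `s` is one of them.
Completeness: if `s R t R u` but not `s R u`, take `p := R s`, `q := {s}` and `r := ∅`;
then `∘(¬r → p)` fails at `t`, witnessed by `u`. -/

section Semantics

variable {W : Type} (M : Model W) {s : W} {φ ψ : Form}

@[simp]
theorem sat_imp : sat M s (Form.imp φ ψ) ↔ (sat M s φ → sat M s ψ) := by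
  simp only [Form.imp, sat, not_and, not_not]

@[simp]
theorem sat_circ : sat M s (Form.circ φ) ↔ (sat M s φ → ∀ t, M.R s t → sat M t φ) := by
  simp only [Form.circ, sat, not_and, not_exists, not_not]

@[simp]
theorem sat_delta :
    sat M s (Form.delta φ) ↔ ∀ t u, M.R s t → M.R s u → sat M t φ → sat M u φ := by
  simp only [Form.delta, sat, not_exists, not_and, not_not]

end Semantics

theorem sat_Tr_of_transitive {W : Type} (M : Model W)
    (hR : ∀ s t u, M.R s t → M.R t u → M.R s u) (s : W) : sat M s Tr := by
  simp only [Tr, sat_imp, sat_circ, sat_delta, sat]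
  rintro ⟨⟨hq, t, hst, hqt⟩, hΔp, hq_imp_p⟩ - x hsx - - y hxy -
  have hpt : M.V 0 t := hq_imp_p (absurd hq) t hst hqt
  exact hΔp t y hst (hR s x y hsx hxy) hpt

theorem not_sat_Tr_of_not_trans {W : Type} {R : W → W → Prop} {s t u : W}
    (hst : R s t) (htu : R t u) (hsu : ¬ R s u) :
    ¬ sat ⟨R, fun n x => match n with | 0 => R s x | 1 => x = s | _ => False⟩ s Tr := by
  have hts : t ≠ s := by
    rintro rfl
    exact hsu htu
  simp only [Tr, sat_imp, sat_circ, sat_delta, sat]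
  intro hTr
  exact hsu <| hTr ⟨⟨trivial, t, hst, hts⟩, fun _ _ _ hsx _ => hsx, fun _ x hsx _ => hsx⟩
    (absurd trivial) t hst hts (fun _ => hst) u htu not_false

theorem stmt5_general (W : Type) (R : W → W → Prop) :
    (∀ s t u : W, R s t → R t u → R s u) ↔
      ∀ (V : Nat → W → Prop) (s : W), sat (Model.mk R V) s Tr := by
  constructor
  · intro htrans V s
    exact sat_Tr_of_transitive _ htrans s
  · intro hTr s t u hst htu
    by_contra hsu
    exact not_sat_Tr_of_not_trans hst htu hsu (hTr _ s)

theorem stmt5 (W : Type) [Nonempty W] (R : W → W → Prop) :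
    (∀ s t u : W, R s t → R t u → R s u) ↔
      ∀ (V : Nat → W → Prop) (s : W), sat (Model.mk R V) s Tr :=
  stmt5_general W R
end

section
/- Let F = (S,R) be a Kripke frame and let F^m = (S,R^m) be its mirror reduction, where R^m = R \ {(x,x) : R(x) = {x}} (i.e. R^m is obtained from R by removing each pair (x,x) for which x is the unique R-successor of x). Then for every formula φ of L(∇,•), every valuation V on S, and every world s in S: ((F^m,V),s) ⊨ φ if and only if ((F,V),s) ⊨ φ. In particular, F^m ⊨ φ iff F ⊨ φ for every φ in L(∇,•). -/
/-- The mirror reduction of `R`: remove each pair `(x,x)` such that `x` is the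
unique `R`-successor of `x`, i.e. `R(x) = {x}`. -/
def mirror {W : Type} (R : W → W → Prop) : W → W → Prop :=
  fun a b => R a b ∧ ¬ (a = b ∧ ∀ c, R a c ↔ c = a)

theorem stmt6 (W : Type) [Nonempty W] (R : W → W → Prop) :
    (∀ (φ : Form) (V : Nat → W → Prop) (s : W),
        sat (Model.mk (mirror R) V) s φ ↔ sat (Model.mk R V) s φ) ∧
    (∀ φ : Form,
        (∀ (V : Nat → W → Prop) (s : W), sat (Model.mk (mirror R) V) s φ) ↔
        (∀ (V : Nat → W → Prop) (s : W), sat (Model.mk R V) s φ)) := by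
  have key : ∀ (φ : Form) (V : Nat → W → Prop) (s : W),
      sat (Model.mk (mirror R) V) s φ ↔ sat (Model.mk R V) s φ := by
    intro φ V
    induction φ with
    | atom n => intro s; rfl
    | neg φ ih => intro s; simp only [sat]; rw [ih]
    | and φ ψ ih1 ih2 => intro s; simp only [sat]; rw [ih1, ih2]
    | nabla φ ih =>
      intro s
      simp only [sat]
      by_cases h : ∀ c, R s c ↔ c = s
      · constructor
        · rintro ⟨t, u, ⟨ht, hnt⟩, _, _⟩
          exact absurd ⟨((h t).1 ht).symm, h⟩ hnt
        · rintro ⟨t, u, ht, hu, hφ, hnφ⟩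
          rw [(h t).1 ht, (h u).1 hu] at *
          exact absurd hφ hnφ
      · constructor
        · rintro ⟨t, u, ht, hu, hφ, hnφ⟩
          exact ⟨t, u, ht.1, hu.1, (ih t).1 hφ, fun hc => hnφ ((ih u).2 hc)⟩
        · rintro ⟨t, u, ht, hu, hφ, hnφ⟩
          exact ⟨t, u, ⟨ht, fun ⟨_, hh⟩ => h hh⟩, ⟨hu, fun ⟨_, hh⟩ => h hh⟩,
            (ih t).2 hφ, fun hc => hnφ ((ih u).1 hc)⟩
    | bull φ ih =>
      intro s
      simp only [sat]
      by_cases h : ∀ c, R s c ↔ c = s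
      · constructor
        · rintro ⟨_, t, ⟨ht, hnt⟩, _⟩
          exact absurd ⟨((h t).1 ht).symm, h⟩ hnt
        · rintro ⟨hφ, t, ht, hnφ⟩
          rw [(h t).1 ht] at hnφ
          exact absurd hφ hnφ
      · constructor
        · rintro ⟨hφ, t, ht, hnφ⟩
          exact ⟨(ih s).1 hφ, t, ht.1, fun hc => hnφ ((ih t).2 hc)⟩
        · rintro ⟨hφ, t, ht, hnφ⟩
          exact ⟨(ih s).2 hφ, t, ⟨ht, fun ⟨_, hh⟩ => h hh⟩, fun hc => hnφ ((ih t).1 hc)⟩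
  exact ⟨key, fun φ => ⟨fun H V s => (key φ V s).1 (H V s), fun H V s => (key φ V s).2 (H V s)⟩⟩
end

section
/- None of the following frame properties is definable in the language L(∇,•): seriality (every world has an R-successor), reflexivity (sRs for all s), Euclideanity (sRt and sRu imply tRu), and convergency (sRt and sRu imply there exists v with tRv and uRv). That is, for each of these properties P, there is no set Γ of L(∇,•)-formulas such that for every Kripke frame F: F validates every formula in Γ if and only if F has property P. -/
/-- `φ` is valid on the frame `(W,R)`: true at every world under every valuation. -/
def FrameValid {W : Type} (R : W → W → Prop) (φ : Form) : Prop :=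
  ∀ (V : Nat → W → Prop) (s : W), sat (Model.mk R V) s φ

/-- The set `Γ` of `L(∇,•)`-formulas defines the frame property `P`:
a frame validates every member of `Γ` iff it has the property. -/
def Defines (Γ : Set Form) (P : (W : Type) → (W → W → Prop) → Prop) : Prop :=
  ∀ (W : Type) [Nonempty W] (R : W → W → Prop),
    (∀ φ ∈ Γ, FrameValid R φ) ↔ P W R

lemma unit_sat (V : Nat → Unit → Prop) (φ : Form) (s : Unit) :
    sat (Model.mk (fun _ _ => True) V) s φ ↔ sat (Model.mk (fun _ _ => False) V) s φ := by
  induction φ generalizing s with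
  | atom n => simp [sat]
  | neg φ ih => simp [sat, ih]
  | and φ ψ ih1 ih2 => simp [sat, ih1, ih2]
  | nabla φ ih =>
    simp only [sat]
    constructor
    · rintro ⟨⟨⟩, ⟨⟩, -, -, h1, h2⟩; exact absurd h1 h2
    · rintro ⟨t, u, h, -⟩; exact absurd h (by simp)
  | bull φ ih =>
    simp only [sat]
    constructor
    · rintro ⟨h1, ⟨⟩, -, h2⟩; exact absurd h1 h2
    · rintro ⟨-, t, h, -⟩; exact absurd h (by simp)

def R1 : Bool → Bool → Prop := fun a b => a = false ∧ b = true
def R2 : Bool → Bool → Prop := fun _ b => b = true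

lemma bool_sat (V : Nat → Bool → Prop) (φ : Form) (s : Bool) :
    sat (Model.mk R1 V) s φ ↔ sat (Model.mk R2 V) s φ := by
  induction φ generalizing s with
  | atom n => simp [sat]
  | neg φ ih => simp [sat, ih]
  | and φ ψ ih1 ih2 => simp [sat, ih1, ih2]
  | nabla φ ih =>
    simp only [sat]
    constructor
    · rintro ⟨t, u, ⟨-, rfl⟩, ⟨-, rfl⟩, h1, h2⟩; exact absurd h1 h2
    · rintro ⟨t, u, (rfl : t = true), (rfl : u = true), h1, h2⟩; exact absurd h1 h2
  | bull φ ih =>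
    simp only [sat]
    constructor
    · rintro ⟨h1, t, ⟨rfl, rfl⟩, h2⟩
      exact ⟨(ih _).mp h1, true, rfl, fun h => h2 ((ih _).mpr h)⟩
    · rintro ⟨h1, t, (rfl : t = true), h2⟩
      refine ⟨(ih _).mpr h1, true, ⟨?_, rfl⟩, fun h => h2 ((ih _).mp h)⟩
      cases s with
      | false => rfl
      | true => exact absurd h1 h2

lemma unit_valid_eq (φ : Form) :
    FrameValid (W := Unit) (fun _ _ => True) φ ↔ FrameValid (W := Unit) (fun _ _ => False) φ := by
  unfold FrameValid
  constructor <;> intro h V s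
  · exact (unit_sat V φ s).mp (h V s)
  · exact (unit_sat V φ s).mpr (h V s)

lemma bool_valid_eq (φ : Form) : FrameValid R1 φ ↔ FrameValid R2 φ := by
  unfold FrameValid
  constructor <;> intro h V s
  · exact (bool_sat V φ s).mp (h V s)
  · exact (bool_sat V φ s).mpr (h V s)

theorem stmt7 :
    (¬ ∃ Γ : Set Form, Defines Γ (fun W R => ∀ s : W, ∃ t, R s t)) ∧
    (¬ ∃ Γ : Set Form, Defines Γ (fun W R => ∀ s : W, R s s)) ∧
    (¬ ∃ Γ : Set Form, Defines Γ (fun W R => ∀ s t u : W, R s t → R s u → R t u)) ∧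
    (¬ ∃ Γ : Set Form, Defines Γ (fun W R => ∀ s t u : W, R s t → R s u → ∃ v, R t v ∧ R u v)) := by
  refine ⟨?_, ?_, ?_, ?_⟩
  · rintro ⟨Γ, hΓ⟩
    have h1 := hΓ Unit (fun _ _ => True)
    have h2 := hΓ Unit (fun _ _ => False)
    have : ∀ φ ∈ Γ, FrameValid (W := Unit) (fun _ _ => True) φ :=
      h1.mpr (fun s => ⟨(), trivial⟩)
    have h3 : ∀ φ ∈ Γ, FrameValid (W := Unit) (fun _ _ => False) φ :=
      fun φ hφ => (unit_valid_eq φ).mp (this φ hφ)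
    obtain ⟨t, ht⟩ := h2.mp h3 ()
    exact ht
  · rintro ⟨Γ, hΓ⟩
    have h1 := hΓ Unit (fun _ _ => True)
    have h2 := hΓ Unit (fun _ _ => False)
    have : ∀ φ ∈ Γ, FrameValid (W := Unit) (fun _ _ => True) φ :=
      h1.mpr (fun s => trivial)
    have h3 : ∀ φ ∈ Γ, FrameValid (W := Unit) (fun _ _ => False) φ :=
      fun φ hφ => (unit_valid_eq φ).mp (this φ hφ)
    exact h2.mp h3 ()
  · rintro ⟨Γ, hΓ⟩
    have h1 := hΓ Bool R2
    have h2 := hΓ Bool R1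
    have : ∀ φ ∈ Γ, FrameValid R2 φ :=
      h1.mpr (fun s t u ht hu => hu)
    have h3 : ∀ φ ∈ Γ, FrameValid R1 φ :=
      fun φ hφ => (bool_valid_eq φ).mpr (this φ hφ)
    have := h2.mp h3 false true true ⟨rfl, rfl⟩ ⟨rfl, rfl⟩
    exact absurd this.1 (by simp)
  · rintro ⟨Γ, hΓ⟩
    have h1 := hΓ Bool R2
    have h2 := hΓ Bool R1
    have : ∀ φ ∈ Γ, FrameValid R2 φ :=
      h1.mpr (fun s t u ht hu => ⟨true, rfl, rfl⟩)
    have h3 : ∀ φ ∈ Γ, FrameValid R1 φ :=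
      fun φ hφ => (bool_valid_eq φ).mpr (this φ hφ)
    obtain ⟨v, hv, -⟩ := h2.mp h3 false true true ⟨rfl, rfl⟩ ⟨rfl, rfl⟩
    exact absurd hv.1 (by simp)
end

section
/- For every n ≥ 1 and all formulas φ, χ_1, …, χ_n of L(∇,•), the formula Δ((χ_1 ∧ ⋯ ∧ χ_n) → φ) ∧ Δχ_1 ∧ ⋯ ∧ Δχ_n ∧ ∘(φ→χ_1) ∧ ⋯ ∧ ∘(φ→χ_n) → (φ ∨ Δφ) is derivable in the proof system K^{∇•}. -/
/-- Boolean evaluation treating atoms, `∇φ` and `•φ` as propositional atoms;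
used to express "instance of a propositional tautology". -/
def evalT (v : Form → Bool) : Form → Bool
  | .neg φ => !(evalT v φ)
  | .and φ ψ => evalT v φ && evalT v ψ
  | φ => v φ

/-- `φ` is an instance of a propositional tautology. -/
def Taut (φ : Form) : Prop := ∀ v : Form → Bool, evalT v φ = true

/-- Derivability in the minimal system `K^{∇•}`. -/
inductive Prov : Form → Prop
  | a0 : ∀ φ, Taut φ → Prov φ
  | a1 : ∀ φ, Prov (Form.imp (.bull φ) φ)
  | a2 : ∀ φ, Prov (Form.ifff (.nabla φ) (.nabla (.neg φ)))
  | a3 : ∀ φ ψ, Prov (Form.imp (.and (.bull (Form.imp ψ φ)) φ) (.bull φ))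
  | a4 : ∀ φ ψ, Prov (Form.imp (.nabla (.and φ ψ)) (Form.orf (.nabla φ) (.nabla ψ)))
  | a5 : ∀ φ ψ, Prov (Form.imp (.bull (.and φ ψ)) (Form.orf (.bull φ) (.bull ψ)))
  | a6 : ∀ φ, Prov (Form.imp (.nabla φ) (Form.orf (.bull φ) (.bull (.neg φ))))
  | a7 : ∀ φ ψ χ, Prov (Form.imp (.and (.bull (Form.imp φ ψ)) (.bull (Form.imp (.neg φ) χ))) (.nabla φ))
  | r1 : ∀ φ, Prov φ → Prov (Form.delta φ)
  | r2 : ∀ φ, Prov φ → Prov (Form.circ φ)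
  | r3 : ∀ φ ψ, Prov (Form.ifff φ ψ) → Prov (Form.ifff (Form.delta φ) (Form.delta ψ))
  | r4 : ∀ φ ψ, Prov (Form.ifff φ ψ) → Prov (Form.ifff (Form.circ φ) (Form.circ ψ))
  | mp : ∀ φ ψ, Prov (Form.imp φ ψ) → Prov φ → Prov ψ

/-- `bigAnd [χ₁, …, χₙ] = χ₁ ∧ ⋯ ∧ χₙ` (for nonempty lists). -/
def bigAnd : List Form → Form
  | [] => Form.neg (Form.and (Form.atom 0) (Form.neg (Form.atom 0)))
  | [φ] => φ
  | φ :: ψ :: rest => Form.and φ (bigAnd (ψ :: rest))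


section KProofAux
open Form

lemma evalT_neg (v : Form → Bool) (a : Form) : evalT v (.neg a) = !(evalT v a) := rfl
lemma evalT_and (v : Form → Bool) (a b : Form) :
    evalT v (.and a b) = (evalT v a && evalT v b) := rfl
lemma evalT_imp (v : Form → Bool) (a b : Form) :
    evalT v (Form.imp a b) = !(evalT v a && !(evalT v b)) := rfl
lemma evalT_orf (v : Form → Bool) (a b : Form) :
    evalT v (Form.orf a b) = !(!(evalT v a) && !(evalT v b)) := rfl
lemma evalT_ifff (v : Form → Bool) (a b : Form) :
    evalT v (Form.ifff a b) = (!(evalT v a && !(evalT v b)) && !(evalT v b && !(evalT v a))) := rfl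
lemma evalT_delta (v : Form → Bool) (a : Form) :
    evalT v (Form.delta a) = !(evalT v (.nabla a)) := rfl
lemma evalT_circ (v : Form → Bool) (a : Form) :
    evalT v (Form.circ a) = !(evalT v (.bull a)) := rfl

lemma tc1 {a b : Form} (h : Taut (a.imp b)) (ha : Prov a) : Prov b :=
  Prov.mp _ _ (Prov.a0 _ h) ha
lemma tc2 {a b c : Form} (h : Taut (a.imp (b.imp c))) (ha : Prov a) (hb : Prov b) : Prov c :=
  Prov.mp _ _ (tc1 h ha) hb
lemma tc3 {a b c d : Form} (h : Taut (a.imp (b.imp (c.imp d))))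
    (ha : Prov a) (hb : Prov b) (hc : Prov c) : Prov d :=
  Prov.mp _ _ (tc2 h ha hb) hc
lemma tc6 {a b c d e f g : Form}
    (h : Taut (a.imp (b.imp (c.imp (d.imp (e.imp (f.imp g)))))))
    (ha : Prov a) (hb : Prov b) (hc : Prov c) (hd : Prov d) (he : Prov e) (hf : Prov f) :
    Prov g :=
  Prov.mp _ _ (Prov.mp _ _ (Prov.mp _ _ (tc3 h ha hb hc) hd) he) hf

lemma provImpRefl (a : Form) : Prov (a.imp a) := by
  apply Prov.a0
  intro v
  simp only [evalT_imp]
  generalize evalT v a = x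
  revert x; decide

/-- contrapositive of A4: `Δa ∧ Δb → Δ(a∧b)` -/
lemma provA4c (a b : Form) :
    Prov (Form.imp (.and (delta a) (delta b)) (delta (.and a b))) := by
  refine tc1 ?_ (Prov.a4 a b)
  intro v
  simp only [evalT_imp, evalT_orf, evalT_delta, evalT_and]
  generalize evalT v (Form.nabla (Form.and a b)) = x
  generalize evalT v (Form.nabla a) = y
  generalize evalT v (Form.nabla b) = z
  revert x y z; decide

/-- contrapositive of A5: `∘a ∧ ∘b → ∘(a∧b)` -/
lemma provA5c (a b : Form) :
    Prov (Form.imp (.and (circ a) (circ b)) (circ (.and a b))) := by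
  refine tc1 ?_ (Prov.a5 a b)
  intro v
  simp only [evalT_imp, evalT_orf, evalT_circ, evalT_and]
  generalize evalT v (Form.bull (Form.and a b)) = x
  generalize evalT v (Form.bull a) = y
  generalize evalT v (Form.bull b) = z
  revert x y z; decide

/-- contrapositive of A6: `∘a ∧ ∘¬a → Δa` -/
lemma provA6c (a : Form) :
    Prov (Form.imp (.and (circ a) (circ (.neg a))) (delta a)) := by
  refine tc1 ?_ (Prov.a6 a)
  intro v
  simp only [evalT_imp, evalT_orf, evalT_circ, evalT_delta, evalT_and]
  generalize evalT v (Form.nabla a) = x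
  generalize evalT v (Form.bull a) = y
  generalize evalT v (Form.bull (Form.neg a)) = z
  revert x y z; decide

/-- `Δχ₁ ∧ ⋯ ∧ Δχₙ → Δ(χ₁ ∧ ⋯ ∧ χₙ)` -/
lemma L_A : ∀ (l : List Form) (x : Form),
    Prov (Form.imp (bigAnd ((x :: l).map Form.delta)) (Form.delta (bigAnd (x :: l)))) := by
  intro l
  induction l with
  | nil =>
    intro x
    simp only [List.map_cons, List.map_nil, bigAnd]
    exact provImpRefl _
  | cons y l' ih =>
    intro x
    have ih' := ih y
    simp only [List.map_cons, bigAnd] at ih' ⊢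
    refine tc2 ?_ ih' (provA4c x (bigAnd (y :: l')))
    intro v
    simp only [evalT_imp, evalT_delta, evalT_and]
    generalize evalT v (bigAnd (Form.delta y :: List.map Form.delta l')) = m
    generalize evalT v (Form.nabla x) = nx
    generalize evalT v (Form.nabla (bigAnd (y :: l'))) = nB
    generalize evalT v (Form.nabla (Form.and x (bigAnd (y :: l')))) = nxB
    revert m nx nB nxB; decide

/-- `∘(φ→χ₁) ∧ ⋯ ∧ ∘(φ→χₙ) → ∘(φ → χ₁∧⋯∧χₙ)` -/
lemma L_B (φ : Form) : ∀ (l : List Form) (x : Form),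
    Prov (Form.imp (bigAnd ((x :: l).map (fun c => Form.circ (Form.imp φ c))))
      (Form.circ (Form.imp φ (bigAnd (x :: l))))) := by
  intro l
  induction l with
  | nil =>
    intro x
    simp only [List.map_cons, List.map_nil, bigAnd]
    exact provImpRefl _
  | cons y l' ih =>
    intro x
    have ih' := ih y
    simp only [List.map_cons, bigAnd] at ih' ⊢
    have hdist : Prov (Form.ifff
        (Form.circ (Form.and (Form.imp φ x) (Form.imp φ (bigAnd (y :: l')))))
        (Form.circ (Form.imp φ (Form.and x (bigAnd (y :: l')))))) := by
      refine Prov.r4 _ _ (Prov.a0 _ ?_)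
      intro v
      simp only [evalT_ifff, evalT_imp, evalT_and]
      generalize evalT v φ = a
      generalize evalT v x = b
      generalize evalT v (bigAnd (y :: l')) = c
      revert a b c; decide
    refine tc3 ?_ ih' (provA5c (Form.imp φ x) (Form.imp φ (bigAnd (y :: l')))) hdist
    intro v
    simp only [evalT_imp, evalT_ifff, evalT_circ, evalT_and]
    generalize evalT v (bigAnd (Form.circ (Form.imp φ y) ::
      List.map (fun c => Form.circ (Form.imp φ c)) l')) = n
    generalize evalT v (Form.bull (Form.imp φ x)) = b1
    generalize evalT v (Form.bull (Form.imp φ (bigAnd (y :: l')))) = b2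
    generalize evalT v (Form.bull (Form.and (Form.imp φ x) (Form.imp φ (bigAnd (y :: l'))))) = b3
    generalize evalT v (Form.bull (Form.imp φ (Form.and x (bigAnd (y :: l'))))) = b4
    revert n b1 b2 b3 b4; decide

lemma finalLemma (M N A φ : Form)
    (hA : Prov (Form.imp M (Form.delta A)))
    (hB : Prov (Form.imp N (Form.circ (Form.imp φ A)))) :
    Prov (Form.imp (.and (Form.delta (Form.imp A φ)) (.and M N))
      (Form.orf φ (Form.delta φ))) := by
  -- P1 : (N ∧ ¬φ) → Δ(φ→A)
  have P1 : Prov (Form.imp (.and N (.neg φ)) (Form.delta (Form.imp φ A))) := by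
    refine tc3 ?_ hB (provA6c (Form.imp φ A)) (Prov.a1 (Form.neg (Form.imp φ A)))
    intro v
    simp only [evalT_imp, evalT_circ, evalT_delta, evalT_neg, evalT_and]
    generalize evalT v N = n
    generalize evalT v (Form.bull (Form.imp φ A)) = bg
    generalize evalT v (Form.bull (Form.neg (Form.imp φ A))) = bng
    generalize evalT v (Form.nabla (Form.imp φ A)) = ng
    generalize evalT v φ = f
    generalize evalT v A = aa
    revert n bg bng ng f aa; decide
  -- R3 congruence : Δ(A ∧ (A→φ)) ↔ Δ(A ∧ φ)
  have hR3b : Prov (Form.ifff (Form.delta (Form.and A (Form.imp A φ)))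
      (Form.delta (Form.and A φ))) := by
    refine Prov.r3 _ _ (Prov.a0 _ ?_)
    intro v
    simp only [evalT_ifff, evalT_imp, evalT_and]
    generalize evalT v A = aa
    generalize evalT v φ = f
    revert aa f; decide
  -- P2 : (M ∧ Δ(A→φ)) → Δ(A∧φ)
  have P2 : Prov (Form.imp (.and M (Form.delta (Form.imp A φ)))
      (Form.delta (Form.and A φ))) := by
    refine tc3 ?_ hA (provA4c A (Form.imp A φ)) hR3b
    intro v
    simp only [evalT_imp, evalT_ifff, evalT_delta, evalT_and]
    generalize evalT v M = m
    generalize evalT v (Form.nabla A) = n1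
    generalize evalT v (Form.nabla (Form.imp A φ)) = n2
    generalize evalT v (Form.nabla (Form.and A (Form.imp A φ))) = n3
    generalize evalT v (Form.nabla (Form.and A φ)) = n4
    revert m n1 n2 n3 n4; decide
  -- R3 congruence : Δ¬φ ↔ Δ(¬(A∧φ) ∧ (φ→A))
  have hR3a : Prov (Form.ifff (Form.delta (Form.neg φ))
      (Form.delta (Form.and (Form.neg (Form.and A φ)) (Form.imp φ A)))) := by
    refine Prov.r3 _ _ (Prov.a0 _ ?_)
    intro v
    simp only [evalT_ifff, evalT_imp, evalT_neg, evalT_and]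
    generalize evalT v A = aa
    generalize evalT v φ = f
    revert aa f; decide
  refine tc6 ?_ P1 P2 (Prov.a2 (Form.and A φ)) hR3a
    (Prov.a4 (Form.neg (Form.and A φ)) (Form.imp φ A)) (Prov.a2 φ)
  intro v
  simp only [evalT_imp, evalT_orf, evalT_ifff, evalT_delta, evalT_neg, evalT_and]
  generalize evalT v M = m
  generalize evalT v N = n
  generalize evalT v A = aa
  generalize evalT v φ = f
  generalize evalT v (Form.nabla (Form.imp A φ)) = dAf
  generalize evalT v (Form.nabla (Form.imp φ A)) = dfA
  generalize evalT v (Form.nabla (Form.and A φ)) = g1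
  generalize evalT v (Form.nabla (Form.neg (Form.and A φ))) = g2
  generalize evalT v (Form.nabla (Form.and (Form.neg (Form.and A φ)) (Form.imp φ A))) = g3
  generalize evalT v (Form.nabla φ) = p
  generalize evalT v (Form.nabla (Form.neg φ)) = q
  revert m n aa f dAf dfA g1 g2 g3 p q; decide

end KProofAux

theorem stmt9 (n : ℕ) (hn : 1 ≤ n) (φ : Form) (χ : Fin n → Form) :
    Prov (Form.imp
      (.and (Form.delta (Form.imp (bigAnd (List.ofFn χ)) φ))
        (.and (bigAnd ((List.ofFn χ).map Form.delta))
          (bigAnd ((List.ofFn χ).map (fun c => Form.circ (Form.imp φ c))))))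
      (Form.orf φ (Form.delta φ))) := by
  obtain ⟨m, rfl⟩ : ∃ m, n = m + 1 := ⟨n - 1, by omega⟩
  rw [List.ofFn_succ]
  exact finalLemma _ _ _ φ (L_A _ _) (L_B φ _ _)
end
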